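/- There is no finite constant C > 0 such that ‖T(f₁,f₂)‖_2 ≤ C ‖f₁‖_∞ ‖f₂‖_1 holds for all nonnegative measurable functions f₁, f₂ on ℝ; that is, in dimension n = 2 the bilinear spherical average T fails to be of strong type at the point K = (0, 1; 1/2). -/

import Mathlib

open MeasureTheory ENNReal

/-- The `L^p` "norm" (with respect to Lebesgue measure on `ℝ`) of an
`ℝ≥0∞`-valued function, with the convention for `p = ∞`. -/
noncomputable def lpNorm (p : ℝ≥0∞) (g : ℝ → ℝ≥0∞) : ℝ≥0∞ :=
  if p = ∞ then essSup g (volume : Measure ℝ)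
  else (∫⁻ x, g x ^ p.toReal) ^ (1 / p.toReal)

/-- The bilinear spherical average in dimension `n = 2`:
`T(f₁,f₂)(x) = (1/(2π)) ∫₀^{2π} f₁(x − cos t) f₂(x − sin t) dt`. -/
noncomputable def T2 (f₁ f₂ : ℝ → ℝ) (x : ℝ) : ℝ≥0∞ :=
  (ENNReal.ofReal (2 * Real.pi))⁻¹ *
    ∫⁻ t in Set.Ioc 0 (2 * Real.pi),
      ENNReal.ofReal (f₁ (x - Real.cos t)) * ENNReal.ofReal (f₂ (x - Real.sin t))

/-!
Test the inequality on `f₁ = 1` and `f₂ = ε⁻¹ χ_(0,ε)`, which have `‖f₁‖_∞ = ‖f₂‖_1 = 1`.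
For `ε < x < 1`, the parameters `t` with `x - sin t ∈ (0, ε)` include the interval
`(arcsin (x - ε), arcsin x)`, of length at least `ε / √(1 - (x - ε)²)` by the mean value
theorem, so `T(f₁,f₂)(x)² ≥ 1 / (8π² (ε + 1 - x))`. Integrating over `(ε, 1)` gives
`‖T(f₁,f₂)‖₂² ≥ log(1/ε) / (8π²)`, which is unbounded as `ε → 0`.
-/

open Real Set

lemma lpNorm_one_eq_lintegral (g : ℝ → ℝ≥0∞) : lpNorm 1 g = ∫⁻ x, g x := by
  simp [_root_.lpNorm]

lemma lpNorm_two_sq_eq_lintegral (g : ℝ → ℝ≥0∞) : lpNorm 2 g ^ 2 = ∫⁻ x, g x ^ 2 := by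
  rw [_root_.lpNorm, if_neg ofNat_ne_top, toReal_ofNat, ← ENNReal.rpow_natCast, ← ENNReal.rpow_mul]
  norm_num [ENNReal.rpow_two]

lemma lpNorm_top_const (c : ℝ≥0∞) : lpNorm ∞ (fun _ => c) = c := by
  rw [_root_.lpNorm, if_pos rfl, essSup_const c (NeZero.ne _)]

noncomputable def bump (ε : ℝ) : ℝ → ℝ := (Ioo 0 ε).indicator fun _ => ε⁻¹

lemma measurable_bump (ε : ℝ) : Measurable (bump ε) :=
  measurable_const.indicator measurableSet_Ioo

lemma bump_nonneg (ε x : ℝ) : 0 ≤ bump ε x :=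
  indicator_nonneg (fun _ hy => inv_nonneg.2 (hy.1.trans hy.2).le) x

lemma lpNorm_one_bump {ε : ℝ} (hε : 0 < ε) :
    lpNorm 1 (fun x => ENNReal.ofReal (bump ε x)) = 1 := by
  have hbump : (fun x => ENNReal.ofReal (bump ε x)) =
      (Ioo 0 ε).indicator fun _ => ENNReal.ofReal ε⁻¹ := by
    ext x
    simp only [bump, indicator_apply]
    split_ifs <;> simp
  rw [lpNorm_one_eq_lintegral, hbump, lintegral_indicator measurableSet_Ioo, setLIntegral_const,
    volume_Ioo, ← ENNReal.ofReal_mul (inv_nonneg.2 hε.le), sub_zero, inv_mul_cancel₀ hε.ne',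
    ENNReal.ofReal_one]

lemma sin_mem_Ioo_of_mem_Ioo_arcsin {a b t : ℝ} (ht : t ∈ Ioo (arcsin a) (arcsin b)) :
    sin t ∈ Ioo a b := by
  have h₁ := neg_pi_div_two_le_arcsin a
  have h₂ := arcsin_le_pi_div_two b
  exact ⟨(arcsin_lt_iff_lt_sin' ⟨by linarith [ht.1], by linarith [ht.2]⟩).1 ht.1,
    (lt_arcsin_iff_sin_lt' ⟨by linarith [ht.1], by linarith [ht.2]⟩).1 ht.2⟩

lemma div_sqrt_le_arcsin_sub_arcsin {u v : ℝ} (hu : 0 ≤ u) (huv : u < v) (hv : v ≤ 1) :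
    (v - u) / √(1 - u ^ 2) ≤ arcsin v - arcsin u := by
  obtain ⟨c, ⟨huc, hcv⟩, hc⟩ := exists_hasDerivAt_eq_slope arcsin (fun y => 1 / √(1 - y ^ 2))
    huv continuous_arcsin.continuousOn
    fun y hy => hasDerivAt_arcsin (by linarith [hy.1]) (by linarith [hy.2])
  have hc_pos : 0 < √(1 - c ^ 2) := sqrt_pos.2 (by nlinarith)
  have hc_le : √(1 - c ^ 2) ≤ √(1 - u ^ 2) := sqrt_le_sqrt (by nlinarith)
  rw [eq_div_iff (sub_pos.2 huv).ne', one_div, inv_mul_eq_div] at hc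
  rw [← hc]
  exact div_le_div_of_nonneg_left (sub_pos.2 huv).le hc_pos hc_le

lemma arcsin_sub_arcsin_le_T2_const_bump {ε x : ℝ} (hxε : 0 ≤ x - ε) :
    (ENNReal.ofReal (2 * π))⁻¹ * (ENNReal.ofReal ε⁻¹ * ENNReal.ofReal (arcsin x - arcsin (x - ε)))
      ≤ T2 (fun _ => 1) (bump ε) x := by
  have hsub : Ioo (arcsin (x - ε)) (arcsin x) ⊆ Ioc 0 (2 * π) := fun t ht =>
    ⟨(arcsin_nonneg.2 hxε).trans_lt ht.1,
      ht.2.le.trans ((arcsin_le_pi_div_two x).trans (by linarith [pi_pos]))⟩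
  have hbump : ∀ t ∈ Ioo (arcsin (x - ε)) (arcsin x), bump ε (x - sin t) = ε⁻¹ := fun t ht => by
    have hsin := sin_mem_Ioo_of_mem_Ioo_arcsin ht
    exact indicator_of_mem (show x - sin t ∈ Ioo 0 ε from
      ⟨by linarith [hsin.2], by linarith [hsin.1]⟩) _
  refine mul_le_mul_right ?_ _
  calc ENNReal.ofReal ε⁻¹ * ENNReal.ofReal (arcsin x - arcsin (x - ε))
      = ∫⁻ t in Ioo (arcsin (x - ε)) (arcsin x),
          ENNReal.ofReal 1 * ENNReal.ofReal (bump ε (x - sin t)) := by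
        rw [setLIntegral_congr_fun measurableSet_Ioo fun t ht => by
          rw [hbump t ht, ENNReal.ofReal_one, one_mul], setLIntegral_const, volume_Ioo]
    _ ≤ _ := lintegral_mono_set hsub

lemma T2_const_bump_sq_ge {ε x : ℝ} (hε : 0 < ε) (hx : x ∈ Ioo ε 1) :
    ENNReal.ofReal ((8 * π ^ 2)⁻¹ * (ε + 1 - x)⁻¹) ≤ T2 (fun _ => 1) (bump ε) x ^ 2 := by
  obtain ⟨hεx, hx1⟩ := hx
  set d := arcsin x - arcsin (x - ε)
  set s := 1 - (x - ε) ^ 2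
  have hs : 0 < s := by nlinarith
  have hs_le : s ≤ 2 * (ε + 1 - x) := by nlinarith
  have hd : 1 / √s ≤ ε⁻¹ * d := by
    rw [le_inv_mul_iff₀ hε, mul_one_div]
    simpa using div_sqrt_le_arcsin_sub_arcsin (u := x - ε) (by linarith) (by linarith) hx1.le
  have hd_sq : s⁻¹ ≤ (ε⁻¹ * d) ^ 2 := by
    simpa [div_pow, sq_sqrt hs.le] using pow_le_pow_left₀ (by positivity) hd 2
  have hd_nonneg : 0 ≤ ε⁻¹ * d := (by positivity : (0:ℝ) ≤ 1 / √s).trans hd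
  have hreal : (8 * π ^ 2)⁻¹ * (ε + 1 - x)⁻¹ ≤ ((2 * π)⁻¹ * (ε⁻¹ * d)) ^ 2 :=
    calc (8 * π ^ 2)⁻¹ * (ε + 1 - x)⁻¹ = (2 * π)⁻¹ ^ 2 * (2 * (ε + 1 - x))⁻¹ := by
          rw [mul_inv (2 : ℝ) (ε + 1 - x)]; ring
      _ ≤ (2 * π)⁻¹ ^ 2 * (ε⁻¹ * d) ^ 2 := by gcongr; exact (inv_anti₀ hs hs_le).trans hd_sq
      _ = ((2 * π)⁻¹ * (ε⁻¹ * d)) ^ 2 := (mul_pow _ _ _).symm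
  calc ENNReal.ofReal ((8 * π ^ 2)⁻¹ * (ε + 1 - x)⁻¹)
      ≤ ENNReal.ofReal ((2 * π)⁻¹ * (ε⁻¹ * d)) ^ 2 := by
        rw [← ENNReal.ofReal_pow (by positivity)]
        exact ENNReal.ofReal_le_ofReal hreal
    _ = ((ENNReal.ofReal (2 * π))⁻¹ * (ENNReal.ofReal ε⁻¹ * ENNReal.ofReal d)) ^ 2 := by
        rw [ENNReal.ofReal_mul (by positivity), ENNReal.ofReal_mul (by positivity),
          ENNReal.ofReal_inv_of_pos (by positivity)]
    _ ≤ T2 (fun _ => 1) (bump ε) x ^ 2 := by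
        gcongr
        exact arcsin_sub_arcsin_le_T2_const_bump (by linarith)

lemma lintegral_Ioo_inv_reflect {a b : ℝ} (ha : 0 < a) (hab : a ≤ b) :
    ∫⁻ x in Ioo a b, ENNReal.ofReal ((a + b - x)⁻¹) = ENNReal.ofReal (log (b / a)) := by
  have hcont : ContinuousOn (fun x => (a + b - x)⁻¹) (Icc a b) :=
    ContinuousOn.inv₀ (by fun_prop) fun x hx => (by linarith [hx.2] : 0 < a + b - x).ne'
  rw [← ofReal_integral_eq_lintegral_ofReal (hcont.integrableOn_Icc.mono_set Ioo_subset_Icc_self)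
    (ae_restrict_of_forall_mem measurableSet_Ioo fun x hx => inv_nonneg.2 (by linarith [hx.2])),
    ← integral_Ioc_eq_integral_Ioo, ← intervalIntegral.integral_of_le hab,
    intervalIntegral.integral_comp_sub_left (fun y => y⁻¹), add_sub_cancel_right,
    add_sub_cancel_left, integral_inv_of_pos ha (ha.trans_le hab)]

lemma lpNorm_two_T2_const_bump_sq_ge {ε : ℝ} (hε0 : 0 < ε) (hε1 : ε < 1) :
    ENNReal.ofReal ((8 * π ^ 2)⁻¹ * log ε⁻¹) ≤ lpNorm 2 (T2 (fun _ => 1) (bump ε)) ^ 2 :=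
  calc ENNReal.ofReal ((8 * π ^ 2)⁻¹ * log ε⁻¹)
      = ∫⁻ x in Ioo ε 1, ENNReal.ofReal ((8 * π ^ 2)⁻¹ * (ε + 1 - x)⁻¹) := by
        simp_rw [ENNReal.ofReal_mul (inv_nonneg.2 (by positivity : (0:ℝ) ≤ 8 * π ^ 2))]
        rw [lintegral_const_mul' _ _ ENNReal.ofReal_ne_top,
          lintegral_Ioo_inv_reflect hε0 hε1.le, one_div]
    _ ≤ ∫⁻ x in Ioo ε 1, T2 (fun _ => 1) (bump ε) x ^ 2 :=
        setLIntegral_mono' measurableSet_Ioo fun _ hx => T2_const_bump_sq_ge hε0 hx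
    _ ≤ ∫⁻ x, T2 (fun _ => 1) (bump ε) x ^ 2 := setLIntegral_le_lintegral _ _
    _ = lpNorm 2 (T2 (fun _ => 1) (bump ε)) ^ 2 := (lpNorm_two_sq_eq_lintegral _).symm

theorem not_strong_type_at_K :
    ¬ ∃ C : ℝ, 0 < C ∧ ∀ f₁ f₂ : ℝ → ℝ, Measurable f₁ → Measurable f₂ →
      (∀ x, 0 ≤ f₁ x) → (∀ x, 0 ≤ f₂ x) →
      lpNorm 2 (T2 f₁ f₂) ≤ ENNReal.ofReal C *
        lpNorm ∞ (fun x => ENNReal.ofReal (f₁ x)) *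
        lpNorm 1 (fun x => ENNReal.ofReal (f₂ x)) := by
  rintro ⟨C, hC, hbound⟩
  set ε := exp (-(8 * π ^ 2 * (C + 1) ^ 2))
  have hε0 : 0 < ε := exp_pos _
  have hε1 : ε < 1 := exp_lt_one_iff.2 (neg_neg_of_pos (by positivity))
  have hlog : (8 * π ^ 2)⁻¹ * log ε⁻¹ = (C + 1) ^ 2 := by
    rw [← exp_neg, neg_neg, log_exp]
    field_simp
  have hT := hbound (fun _ => 1) (bump ε) measurable_const (measurable_bump ε)
    (fun _ => zero_le_one) (bump_nonneg ε)
  rw [ENNReal.ofReal_one, lpNorm_top_const, lpNorm_one_bump hε0, mul_one, mul_one] at hT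
  have hsq := (lpNorm_two_T2_const_bump_sq_ge hε0 hε1).trans (pow_le_pow_left' hT 2)
  rw [hlog, ← ENNReal.ofReal_pow hC.le, ENNReal.ofReal_le_ofReal_iff (by positivity)] at hsq
  nlinarith
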